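/- Let Γ = ℤ^4 ⋊ ℤ be the semidirect product where 1 ∈ ℤ acts on ℤ^4 by the matrix A (the companion matrix of X^4 - 2X^3 - 2X + 1). There is no surjective group homomorphism from any finite-index subgroup of Γ onto ℤ^3 whose kernel contains the commutator subgroup of that finite-index subgroup; equivalently, the abelianization of every finite-index subgroup of Γ does not surject onto ℤ^3. -/
import Mathlib



open Matrix SemidirectProduct

/-- The companion matrix `A` of `X^4 - 2X^3 - 2X + 1`, an element of `GL(4, ℤ)`. -/
def A : Matrix (Fin 4) (Fin 4) ℤ :=
  !![0, 0, 0, -1; 1, 0, 0, 2; 0, 1, 0, 0; 0, 0, 1, 2]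

/-- The inverse of `A` over `ℤ`. -/
def Ainv : Matrix (Fin 4) (Fin 4) ℤ :=
  !![2, 1, 0, 0; 0, 0, 1, 0; 2, 0, 0, 1; -1, 0, 0, 0]

/-- The automorphism `v ↦ A·v` of `ℤ^4`. -/
def Aaut : AddAut (Fin 4 → ℤ) where
  toFun := A.mulVec
  invFun := Ainv.mulVec
  left_inv v := by
    rw [Matrix.mulVec_mulVec, show Ainv * A = 1 by decide, Matrix.one_mulVec]
  right_inv v := by
    rw [Matrix.mulVec_mulVec, show A * Ainv = 1 by decide, Matrix.one_mulVec]
  map_add' x y := Matrix.mulVec_add A x y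

/-- The action `φ : ℤ → Aut(ℤ^4)` sending `1` to `v ↦ A·v`. -/
def φ : Multiplicative ℤ →* MulAut (Multiplicative (Fin 4 → ℤ)) :=
  zpowersHom _ (AddEquiv.toMultiplicative Aaut)

/-- The semidirect product `Γ = ℤ^4 ⋊ ℤ`. -/
abbrev Γ : Type := Multiplicative (Fin 4 → ℤ) ⋊[φ] Multiplicative ℤ

/-- The canonical projection `π : Γ → ℤ`. -/
def π : Γ →* Multiplicative ℤ := SemidirectProduct.rightHom

namespace S16
open Multiplicative


abbrev Mat := Matrix (Fin 4) (Fin 4) ℤ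

def C : Mat := A + Ainv - 1

lemma hAAinv : A * Ainv = 1 := by decide
lemma hAinvA : Ainv * A = 1 := by decide
lemma hC : C * C = (3 : ℤ) • (1 : Mat) := by decide

lemma commAB : Commute A Ainv := by unfold Commute SemiconjBy; rw [hAAinv, hAinvA]

def xs : ℕ → ℤ × ℤ
  | 0 => (2, 0)
  | 1 => (1, 1)
  | n+2 => ((xs (n+1)).1 + 3*(xs (n+1)).2 - (xs n).1,
            (xs (n+1)).1 + (xs (n+1)).2 - (xs n).2)

lemma pow_add_pow : ∀ n : ℕ, A ^ n + Ainv ^ n = (xs n).1 • (1 : Mat) + (xs n).2 • C := by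
  have expand : ∀ p q : ℤ, (C + 1) * (p • (1 : Mat) + q • C) = (p + 3*q) • 1 + (p + q) • C := by
    intro p q
    rw [mul_add, mul_smul_comm, mul_smul_comm, mul_one, add_mul, one_mul, hC]
    module
  have key : ∀ n : ℕ, (A ^ n + Ainv ^ n = (xs n).1 • (1 : Mat) + (xs n).2 • C) ∧
      (A ^ (n+1) + Ainv ^ (n+1) = (xs (n+1)).1 • (1 : Mat) + (xs (n+1)).2 • C) := by
    intro n
    induction n with
    | zero => constructor <;> · show _ = _ • _ + _ • _; decide
    | succ n ih =>
      refine ⟨ih.2, ?_⟩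
      have h1 : A * Ainv ^ (n+1) = Ainv ^ n := by
        rw [pow_succ', ← mul_assoc, hAAinv, one_mul]
      have h2 : Ainv * A ^ (n+1) = A ^ n := by
        rw [pow_succ', ← mul_assoc, hAinvA, one_mul]
      have hstep : A ^ (n+2) + Ainv ^ (n+2) =
          (A + Ainv) * (A ^ (n+1) + Ainv ^ (n+1)) - (A ^ n + Ainv ^ n) := by
        rw [add_mul, mul_add, mul_add, h1, h2, ← pow_succ', ← pow_succ']
        abel
      have hCA : A + Ainv = C + 1 := by rw [C]; abel
      rw [hstep, hCA, ih.1, ih.2, expand]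
      show _ = (xs (n+2)).1 • (1 : Mat) + (xs (n+2)).2 • C
      simp only [xs]
      module
  exact fun n => (key n).1

lemma xs_pos : ∀ n : ℕ, 1 ≤ (xs (n+1)).2 := by
  have Q : ∀ n : ℕ,
      (1 ≤ (xs (n+1)).1 ∧ 1 ≤ (xs (n+1)).2 ∧ (xs (n+1)).2 ≤ (xs (n+1)).1 ∧ (xs (n+1)).1 ≤ 3*(xs (n+1)).2) ∧
      (1 ≤ (xs (n+2)).1 ∧ 1 ≤ (xs (n+2)).2 ∧ (xs (n+2)).2 ≤ (xs (n+2)).1 ∧ (xs (n+2)).1 ≤ 3*(xs (n+2)).2) ∧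
      (xs (n+1)).1 ≤ (xs (n+2)).1 ∧ (xs (n+1)).2 ≤ (xs (n+2)).2 := by
    intro n
    induction n with
    | zero => norm_num [xs]
    | succ n ih =>
      simp only [show n+1+1=n+2 from rfl, show n+1+2=n+3 from rfl]
      obtain ⟨h1, h2, h3⟩ := ih
      have e1 : (xs (n+3)).1 = (xs (n+2)).1 + 3*(xs (n+2)).2 - (xs (n+1)).1 := by
        show (xs (n+1+2)).1 = _; simp only [xs]
      have e2 : (xs (n+3)).2 = (xs (n+2)).1 + (xs (n+2)).2 - (xs (n+1)).2 := by
        show (xs (n+1+2)).2 = _; simp only [xs]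
      refine ⟨h2, ⟨?_, ?_, ?_, ?_⟩, ?_, ?_⟩ <;> omega
  exact fun n => (Q n).1.2.1

lemma nat_not_sq : ∀ (a : ℕ), a ≠ 0 → ∀ b : ℕ, b^2 ≠ 3*a^2 := by
  intro a
  induction a using Nat.strong_induction_on with
  | _ a ih =>
    intro ha b hb
    have h3 : (3 : ℕ) ∣ b := Nat.Prime.dvd_of_dvd_pow (by norm_num) ⟨a^2, hb⟩
    obtain ⟨c, rfl⟩ := h3
    have h9 : 9 * c^2 = 3 * a^2 := by ring_nf; ring_nf at hb; linarith
    have ha2 : a^2 = 3*c^2 := by linarith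
    have hc0 : c ≠ 0 := by
      rintro rfl
      simp at ha2
      exact ha (by nlinarith)
    have hlt : c < a := by nlinarith [Nat.pos_of_ne_zero hc0, Nat.pos_of_ne_zero ha]
    exact ih c hlt hc0 a ha2

lemma int_not_sq (y z : ℤ) (hy : y ≠ 0) : z^2 ≠ 3*y^2 := by
  intro h
  apply nat_not_sq y.natAbs (by simpa using hy) z.natAbs
  have := congrArg Int.natAbs h
  simpa [Int.natAbs_mul, Int.natAbs_pow] using this

lemma det_ne (n : ℕ) : (A ^ (n+1) - 1 : Mat).det ≠ 0 := by
  set p := (xs (n+1)).1 with hp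
  set q := (xs (n+1)).2 with hq
  have hq1 : 1 ≤ q := xs_pos n
  have hcomm : A ^ (n+1) * Ainv ^ (n+1) = 1 := by
    rw [← commAB.mul_pow, hAAinv, one_pow]
  have hM : (A ^ (n+1) - 1 : Mat) * (Ainv ^ (n+1) - 1) = (2 - p) • (1 : Mat) - q • C := by
    have h2 : (A ^ (n+1) - 1 : Mat) * (Ainv ^ (n+1) - 1)
        = (2 : ℤ) • (1 : Mat) - (A ^ (n+1) + Ainv ^ (n+1)) := by
      simp only [sub_mul, mul_sub, hcomm, one_mul, mul_one]
      abel
    rw [h2, pow_add_pow, ← hp, ← hq]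
    module
  have hN2 : ((2 - p) • (1 : Mat) - q • C) * ((2 - p) • (1 : Mat) + q • C)
      = ((2-p)^2 - 3*q^2) • (1 : Mat) := by
    simp only [sub_mul, mul_add, smul_mul_smul_comm, one_mul, mul_one, hC]
    module
  have hD : ((2-p)^2 - 3*q^2) ≠ 0 := by
    intro h
    exact int_not_sq q (2-p) (by omega) (by linarith)
  have hdet : (A ^ (n+1) - 1 : Mat).det * ((Ainv ^ (n+1) - 1 : Mat).det *
      (((2 - p) • (1 : Mat) + q • C).det)) = ((2-p)^2 - 3*q^2)^4 := by
    rw [← det_mul, ← det_mul, ← mul_assoc, hM, hN2, det_smul, det_one, mul_one]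
    norm_num
  intro h0
  rw [h0, zero_mul] at hdet
  exact pow_ne_zero 4 hD hdet.symm



abbrev Nt := Multiplicative (Fin 4 → ℤ)

abbrev ι : Nt →* Γ := SemidirectProduct.inl

lemma mulaut_pow (n : ℕ) (v : Fin 4 → ℤ) :
    ((AddEquiv.toMultiplicative Aaut) ^ n : MulAut Nt) (ofAdd v) = ofAdd ((A ^ n).mulVec v) := by
  induction n generalizing v with
  | zero => simp [Matrix.one_mulVec]
  | succ n ih =>
    rw [pow_succ, MulAut.mul_apply]
    have h1 : (AddEquiv.toMultiplicative Aaut) (ofAdd v) = ofAdd (A.mulVec v) := rfl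
    rw [h1, ih, Matrix.mulVec_mulVec, ← pow_succ]

lemma φ_apply (n : ℕ) (v : Fin 4 → ℤ) :
    φ (ofAdd ((n : ℤ))) (ofAdd v) = ofAdd ((A ^ n).mulVec v) := by
  show (zpowersHom _ (AddEquiv.toMultiplicative Aaut)) _ _ = _
  rw [zpowersHom_apply, toAdd_ofAdd, zpow_natCast, mulaut_pow]

lemma conj_inl (t : Γ) (u : Nt) :
    t * ι u * t⁻¹ = ι (φ (π t) u) := by
  have hπ : π t = t.right := rfl
  apply SemidirectProduct.ext
  · simp only [SemidirectProduct.mul_left, SemidirectProduct.mul_right,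
      SemidirectProduct.inv_left, SemidirectProduct.inv_right, SemidirectProduct.left_inl,
      SemidirectProduct.right_inl, mul_one, hπ]
    rw [← MulAut.mul_apply _ (φ t.right) (φ t.right⁻¹), ← _root_.map_mul, mul_inv_cancel,
      _root_.map_one, MulAut.one_apply]
    rw [mul_comm t.left, mul_assoc, mul_inv_cancel, mul_one]
  · simp [SemidirectProduct.mul_right, SemidirectProduct.inv_right,
      SemidirectProduct.right_inl]

lemma tf (z : Multiplicative (Fin 3 → ℤ)) (c : ℤ) (hc : c ≠ 0) (h : z ^ c = 1) : z = 1 := by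
  have h1 : c • z.toAdd = 0 := by
    have := congrArg Multiplicative.toAdd h
    rwa [toAdd_zpow] at this
  have h2 : z.toAdd = 0 := by
    funext i
    have := congrFun h1 i
    simp only [Pi.smul_apply, smul_eq_mul, Pi.zero_apply] at this
    exact (mul_eq_zero.mp this).resolve_left hc
  calc z = ofAdd z.toAdd := rfl
  _ = 1 := by rw [h2, ofAdd_zero]

theorem no_surj (Ω : Subgroup Γ) (hΩ : Ω.FiniteIndex)
    (f : ↥Ω →* Multiplicative (Fin 3 → ℤ)) : ¬ Function.Surjective f := by
  intro hf
  classical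
  -- commutators die
  have fcomm : ∀ x y : ↥Ω, f (x * y * x⁻¹ * y⁻¹) = 1 := by
    intro x y
    rw [_root_.map_mul, _root_.map_mul, _root_.map_mul, _root_.map_inv, _root_.map_inv, mul_comm (f x) (f y)]
    group
  -- K = Ω ∩ ℤ⁴, finite index
  set K : Subgroup Nt := Ω.comap (ι : Nt →* Γ) with hK
  have hKfi : K.index ≠ 0 := by
    have h1 : (Ω.subgroupOf (ι : Nt →* Γ).range).FiniteIndex :=
      Subgroup.instFiniteIndex_subgroupOf Ω _
    rw [hK, Subgroup.index_comap]
    exact h1.index_ne_zero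
  set k := K.index with hk
  have hKmem : ∀ u : Nt, u ^ k ∈ K := fun u => K.pow_index_mem u
  -- generator of image of Ω in ℤ
  obtain ⟨a, ha⟩ := Int.subgroup_cyclic ((Ω.map π).toAddSubgroup')
  have hmem : ∀ ω : ↥Ω, ∃ c : ℤ, c * a = Multiplicative.toAdd (π (ω : Γ)) := by
    intro ω
    have h1 : π (ω : Γ) ∈ Ω.map π := ⟨ω, ω.2, rfl⟩
    have h2 : Multiplicative.toAdd (π (ω : Γ)) ∈ (Ω.map π).toAddSubgroup' := h1
    rw [ha] at h2
    simpa [smul_eq_mul] using AddSubgroup.mem_closure_singleton.mp h2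
  have ha0 : a ≠ 0 := by
    rintro rfl
    have hle : Ω ≤ π.ker := by
      intro g hg
      obtain ⟨c, hc⟩ := hmem ⟨g, hg⟩
      rw [mul_zero] at hc
      have : π g = 1 := by
        calc π g = ofAdd (Multiplicative.toAdd (π g)) := rfl
        _ = ofAdd 0 := by rw [← hc]
        _ = 1 := ofAdd_zero
      exact MonoidHom.mem_ker.mpr this
    have hinf : Infinite ↥π.range :=
      Infinite.of_injective (fun z : Multiplicative ℤ =>
          (⟨z, SemidirectProduct.rightHom_surjective z⟩ : ↥π.range))
        (fun x y h => by simpa using congrArg Subtype.val h)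
    have h0 : π.ker.index = 0 := by
      rw [Subgroup.index_ker]; exact Nat.card_eq_zero_of_infinite
    have hdvd := Subgroup.index_dvd_of_le hle
    rw [h0] at hdvd
    exact hΩ.index_ne_zero (zero_dvd_iff.mp hdvd)
  -- element T of Ω with π T = ofAdd a
  have haS : ofAdd a ∈ Ω.map π := by
    have h1 : a ∈ AddSubgroup.closure ({a} : Set ℤ) :=
      AddSubgroup.mem_closure_singleton.mpr ⟨1, one_smul _ _⟩
    rw [← ha] at h1
    exact h1
  obtain ⟨tg, htgΩ, htg⟩ := haS
  set T : ↥Ω := ⟨tg, htgΩ⟩ with hT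
  -- element s of Ω with π s = n+1 > 0
  obtain ⟨n, hn⟩ : ∃ n : ℕ, a.natAbs = n + 1 := ⟨a.natAbs - 1, by omega⟩
  obtain ⟨s, hs⟩ : ∃ s : ↥Ω, π (s : Γ) = ofAdd (((n+1 : ℕ) : ℤ)) := by
    rcases le_or_gt 0 a with h | h
    · refine ⟨T, ?_⟩
      rw [hT, htg]
      congr 1
      omega
    · refine ⟨T⁻¹, ?_⟩
      have : ((T⁻¹ : ↥Ω) : Γ) = tg⁻¹ := rfl
      rw [this, _root_.map_inv, htg, ← ofAdd_neg]
      congr 1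
      omega
  set m := n + 1 with hm
  set d := (A ^ m - 1 : Mat).det with hd
  have hdne : d ≠ 0 := det_ne n
  -- conjugation formula
  have conj_eq : ∀ u : Fin 4 → ℤ,
      (s : Γ) * ι (ofAdd u) * (s : Γ)⁻¹ = ι (ofAdd ((A ^ m).mulVec u)) := by
    intro u
    rw [conj_inl, hs, φ_apply]
  -- f kills Ω ∩ ℤ⁴
  have kill : ∀ (v : Fin 4 → ℤ) (hv : ι (ofAdd v) ∈ Ω), f ⟨ι (ofAdd v), hv⟩ = 1 := by
    intro v hv
    set u := (A ^ m - 1 : Mat).adjugate.mulVec v with hu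
    set w : Fin 4 → ℤ := (k : ℤ) • u with hwdef
    have hw : ι (ofAdd w) ∈ Ω := by
      have h1 := hKmem (ofAdd u)
      rw [← ofAdd_nsmul, ← natCast_zsmul] at h1
      exact h1
    have key : (A ^ m).mulVec w - w = ((k : ℤ) * d) • v := by
      have h1 : (A ^ m - 1 : Mat).mulVec w = (A ^ m).mulVec w - w := by
        rw [Matrix.sub_mulVec, Matrix.one_mulVec]
      have h2 : (A ^ m - 1 : Mat).mulVec u = d • v := by
        rw [hu, Matrix.mulVec_mulVec, Matrix.mul_adjugate, ← hd, Matrix.smul_mulVec,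
          Matrix.one_mulVec]
      rw [← h1, hwdef, Matrix.mulVec_smul, h2, smul_smul]
    set U : ↥Ω := ⟨ι (ofAdd w), hw⟩ with hU
    set E : ↥Ω := s * U * s⁻¹ * U⁻¹ with hE
    have hEc : (E : Γ) = ((⟨ι (ofAdd v), hv⟩ : ↥Ω) : Γ) ^ ((k : ℤ) * d) := by
      show (s : Γ) * (U : Γ) * (s : Γ)⁻¹ * (U : Γ)⁻¹ = _
      rw [hU]
      show (s : Γ) * ι (ofAdd w) * (s : Γ)⁻¹ * (ι (ofAdd w))⁻¹ = _
      rw [conj_eq w, ← _root_.map_inv, ← _root_.map_mul]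
      have h3 : ofAdd ((A ^ m).mulVec w) * (ofAdd w)⁻¹ = ofAdd ((A ^ m).mulVec w - w) := rfl
      rw [h3, key, ofAdd_zsmul, _root_.map_zpow]
    have hEV : E = (⟨ι (ofAdd v), hv⟩ : ↥Ω) ^ ((k : ℤ) * d) := by
      apply Subtype.ext
      rw [hEc]
      rfl
    have h4 : f E = 1 := fcomm s U
    rw [hEV, _root_.map_zpow] at h4
    exact tf _ _ (mul_ne_zero (Int.natCast_ne_zero.mpr hKfi) hdne) h4
  -- f factors through powers of f T
  have factor : ∀ ω : ↥Ω, ∃ c : ℤ, f ω = f T ^ c := by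
    intro ω
    obtain ⟨c, hc⟩ := hmem ω
    refine ⟨c, ?_⟩
    set w : ↥Ω := ω * T ^ (-c) with hw
    have hπw : π (w : Γ) = 1 := by
      have h1 : (w : Γ) = (ω : Γ) * (tg) ^ (-c) := rfl
      have h2 : π (ω : Γ) = ofAdd (c * a) := by
        rw [← ofAdd_toAdd (π (ω : Γ)), ← hc]
      rw [h1, _root_.map_mul, _root_.map_zpow, htg, ← ofAdd_zsmul, h2, ← ofAdd_add,
        show c * a + (-c) • a = 0 by rw [smul_eq_mul]; ring, ofAdd_zero]
    have hwin : (w : Γ) = ι (ofAdd (Multiplicative.toAdd (w : Γ).left)) := by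
      apply SemidirectProduct.ext
      · rfl
      · rw [SemidirectProduct.right_inl]
        calc (w : Γ).right = π (w : Γ) := rfl
        _ = 1 := hπw
    have hmem2 : ι (ofAdd (Multiplicative.toAdd (w : Γ).left)) ∈ Ω := hwin ▸ w.2
    have h5 : f w = 1 := by
      have h6 : w = ⟨ι (ofAdd (Multiplicative.toAdd (w : Γ).left)), hmem2⟩ :=
        Subtype.ext hwin
      rw [h6]
      exact kill _ _
    have h7 : ω = w * T ^ c := by
      rw [hw, mul_assoc, ← _root_.zpow_add, neg_add_cancel, zpow_zero, mul_one]
    rw [h7, _root_.map_mul, _root_.map_zpow, h5, one_mul]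
  -- conclusion: ℤ³ would be cyclic
  set W : Fin 3 → ℤ := Multiplicative.toAdd (f T) with hW
  obtain ⟨ω₀, hω₀⟩ := hf (ofAdd (fun i => if i = 0 then 1 else 0))
  obtain ⟨ω₁, hω₁⟩ := hf (ofAdd (fun i => if i = 1 then 1 else 0))
  obtain ⟨c₀, hc₀⟩ := factor ω₀
  obtain ⟨c₁, hc₁⟩ := factor ω₁
  rw [hc₀] at hω₀
  rw [hc₁] at hω₁
  have e₀ := congrArg Multiplicative.toAdd hω₀
  have e₁ := congrArg Multiplicative.toAdd hω₁
  rw [toAdd_zpow, toAdd_ofAdd] at e₀ e₁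
  have g00 := congrFun e₀ 0
  have g10 := congrFun e₁ 0
  have g11 := congrFun e₁ 1
  simp only [Pi.smul_apply, smul_eq_mul] at g00 g10 g11
  norm_num at g00 g10 g11
  rcases g10 with h | h
  · simp [h] at g11
  · simp [h] at g00


theorem main (Ω : Subgroup Γ) (hΩ : Ω.FiniteIndex) :
    (¬ ∃ f : ↥Ω →* Multiplicative (Fin 3 → ℤ),
        commutator ↥Ω ≤ f.ker ∧ Function.Surjective f) ∧
      ¬ ∃ g : Abelianization ↥Ω →* Multiplicative (Fin 3 → ℤ), Function.Surjective g := by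
  constructor
  · rintro ⟨f, -, hf⟩
    exact no_surj Ω hΩ f hf
  · rintro ⟨g, hg⟩
    exact no_surj Ω hΩ (g.comp Abelianization.of)
      (hg.comp (fun x => Quotient.inductionOn x (fun y => ⟨y, rfl⟩)))

end S16

/-- There is no surjective homomorphism from a finite-index subgroup `Ω` of `Γ = ℤ^4 ⋊ ℤ`
onto `ℤ³` whose kernel contains the commutator subgroup of `Ω`; equivalently, the
abelianization of `Ω` does not surject onto `ℤ³`. -/
theorem stmt_16 (Ω : Subgroup Γ) (hΩ : Ω.FiniteIndex) :
    (¬ ∃ f : ↥Ω →* Multiplicative (Fin 3 → ℤ),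
        commutator ↥Ω ≤ f.ker ∧ Function.Surjective f) ∧
      ¬ ∃ g : Abelianization ↥Ω →* Multiplicative (Fin 3 → ℤ), Function.Surjective g := by
  exact S16.main Ω hΩ
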